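/- If |f(S)| ≤ M for all S ⊆ V, then the Lovász-extension subgradient vector g defined componentwise by g_{σ(i)} = f({σ(1),…,σ(i)}) − f({σ(1),…,σ(i−1)}) satisfies ‖g‖₂ ≤ 2M√n, and if f is submodular with f(∅)=0 then ‖g‖₂ ≤ 4M. -/

import Mathlib

/-- `prefixSet σ k = {σ(0), …, σ(k-1)}`, the image under `σ` of the first `k` indices. -/
def prefixSet {n : ℕ} (σ : Equiv.Perm (Fin n)) (k : ℕ) : Finset (Fin n) :=
  (Finset.univ.filter (fun j : Fin n => (j : ℕ) < k)).image σ

/-- `f` is submodular: diminishing marginal returns. -/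
def Submodular {n : ℕ} (f : Finset (Fin n) → ℝ) : Prop :=
  ∀ A B : Finset (Fin n), A ⊆ B → ∀ i : Fin n, i ∉ B →
    f (insert i B) - f B ≤ f (insert i A) - f A

lemma prefixSet_n {n : ℕ} (σ : Equiv.Perm (Fin n)) : prefixSet σ n = Finset.univ := by
  apply Finset.eq_univ_iff_forall.mpr
  intro j
  simp only [prefixSet, Finset.mem_image, Finset.mem_filter, Finset.mem_univ, true_and]
  exact ⟨σ.symm j, (σ.symm j).isLt, σ.apply_symm_apply j⟩

lemma mem_prefixSet {n : ℕ} (σ : Equiv.Perm (Fin n)) (k : ℕ) (j : Fin n) :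
    σ j ∈ prefixSet σ k ↔ (j : ℕ) < k := by
  simp only [prefixSet, Finset.mem_image, Finset.mem_filter, Finset.mem_univ, true_and]
  constructor
  · rintro ⟨a, ha, haj⟩; rwa [σ.injective haj] at ha
  · intro h; exact ⟨j, h, rfl⟩

lemma prefixSet_succ {n : ℕ} (σ : Equiv.Perm (Fin n)) (a : Fin n) :
    prefixSet σ ((a : ℕ) + 1) = insert (σ a) (prefixSet σ (a : ℕ)) := by
  unfold prefixSet
  rw [← Finset.image_insert]
  congr 1
  ext j
  simp only [Finset.mem_insert, Finset.mem_filter, Finset.mem_univ, true_and,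
    Nat.lt_succ_iff, le_iff_lt_or_eq, Fin.ext_iff]
  tauto

lemma key_sum {n : ℕ} (f : Finset (Fin n) → ℝ) (hsub : Submodular f)
    (σ : Equiv.Perm (Fin n)) (s : Finset (Fin n)) :
    (∑ i ∈ s, (f (prefixSet σ ((i : ℕ) + 1)) - f (prefixSet σ (i : ℕ))))
      ≤ f (s.image σ) - f ∅ := by
  induction s using Finset.induction_on_max with
  | empty => simp
  | insert a s ha ih =>
    have hanotin : a ∉ s := fun h => lt_irrefl a (ha a h)
    rw [Finset.sum_insert hanotin]
    have hsubset : s.image σ ⊆ prefixSet σ (a : ℕ) := by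
      intro y hy
      obtain ⟨b, hb, rfl⟩ := Finset.mem_image.mp hy
      exact (mem_prefixSet σ a b).mpr (ha b hb)
    have hσa : σ a ∉ prefixSet σ (a : ℕ) := by
      rw [mem_prefixSet]; omega
    have h1 := hsub (s.image σ) (prefixSet σ (a : ℕ)) hsubset (σ a) hσa
    rw [← prefixSet_succ] at h1
    rw [Finset.image_insert]
    linarith [ih]

/-- Norm bounds for the Lovász-extension subgradient `g`, with
`g_{σ(i)} = f(S_i) − f(S_{i−1})`: if `|f(S)| ≤ M` for all `S` then `‖g‖₂ ≤ 2M√n`,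
and if moreover `f` is submodular with `f(∅) = 0` then `‖g‖₂ ≤ 4M`. -/
theorem lovasz_subgradient_norm_bounds {n : ℕ} (f : Finset (Fin n) → ℝ) (M : ℝ)
    (hM : ∀ S : Finset (Fin n), |f S| ≤ M)
    (x : Fin n → ℝ) (σ : Equiv.Perm (Fin n)) (hσ : Antitone (fun i => x (σ i)))
    (g : EuclideanSpace ℝ (Fin n))
    (hg : ∀ i : Fin n,
      g (σ i) = f (prefixSet σ ((i : ℕ) + 1)) - f (prefixSet σ (i : ℕ))) :
    ‖g‖ ≤ 2 * M * Real.sqrt n ∧ (Submodular f → f ∅ = 0 → ‖g‖ ≤ 4 * M) := by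
  have hM0 : 0 ≤ M := le_trans (abs_nonneg _) (hM ∅)
  have hnorm : ‖g‖ = Real.sqrt (∑ i, g i ^ 2) := by
    rw [EuclideanSpace.norm_eq]
    congr 1
    exact Finset.sum_congr rfl (fun i _ => by rw [Real.norm_eq_abs, sq_abs])
  have hbound : ∀ j : Fin n, |g j| ≤ 2 * M := by
    intro j
    have := hg (σ.symm j)
    rw [σ.apply_symm_apply] at this
    rw [this]
    have ha := hM (prefixSet σ (((σ.symm j) : ℕ) + 1))
    have hb := hM (prefixSet σ ((σ.symm j) : ℕ))
    have habs := abs_sub (f (prefixSet σ (((σ.symm j) : ℕ) + 1)))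
      (f (prefixSet σ ((σ.symm j) : ℕ)))
    linarith
  constructor
  · rw [hnorm]
    have h1 : (∑ i, g i ^ 2) ≤ (n : ℝ) * (2 * M) ^ 2 := by
      calc (∑ i, g i ^ 2) ≤ ∑ _i : Fin n, (2 * M) ^ 2 := by
            apply Finset.sum_le_sum
            intro i _
            have := hbound i
            calc g i ^ 2 = |g i| ^ 2 := (sq_abs _).symm
              _ ≤ (2 * M) ^ 2 := by
                  apply pow_le_pow_left₀ (abs_nonneg _) this
        _ = (n : ℝ) * (2 * M) ^ 2 := by simp [Finset.sum_const, mul_comm]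
    calc Real.sqrt (∑ i, g i ^ 2) ≤ Real.sqrt ((n : ℝ) * (2 * M) ^ 2) :=
          Real.sqrt_le_sqrt h1
      _ = 2 * M * Real.sqrt n := by
          rw [Real.sqrt_mul (Nat.cast_nonneg n), Real.sqrt_sq (by linarith)]
          ring
  · intro hsub h0
    -- ‖g‖ ≤ ℓ¹ norm
    have hl1 : ‖g‖ ≤ ∑ i, |g i| := by
      rw [hnorm]
      have h2 : (∑ i, g i ^ 2) ≤ (∑ i, |g i|) ^ 2 := by
        calc (∑ i, g i ^ 2) = ∑ i, |g i| ^ 2 := by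
              exact Finset.sum_congr rfl (fun i _ => (sq_abs _).symm)
          _ ≤ (∑ i, |g i|) ^ 2 :=
              Finset.sum_sq_le_sq_sum_of_nonneg (fun i _ => abs_nonneg _)
      calc Real.sqrt (∑ i, g i ^ 2) ≤ Real.sqrt ((∑ i, |g i|) ^ 2) := Real.sqrt_le_sqrt h2
        _ = ∑ i, |g i| := Real.sqrt_sq (Finset.sum_nonneg fun i _ => abs_nonneg _)
    -- reindex
    have hreindex : (∑ i, |g i|) = ∑ i, |g (σ i)| := (Equiv.sum_comp σ (fun j => |g j|)).symm
    -- telescoping total sum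
    have htotal : (∑ i, g (σ i)) = f Finset.univ := by
      calc (∑ i : Fin n, g (σ i))
          = ∑ i : Fin n, (f (prefixSet σ ((i : ℕ) + 1)) - f (prefixSet σ (i : ℕ))) :=
            Finset.sum_congr rfl (fun i _ => hg i)
        _ = ∑ k ∈ Finset.range n, (f (prefixSet σ (k + 1)) - f (prefixSet σ k)) :=
            Fin.sum_univ_eq_sum_range (fun k => f (prefixSet σ (k + 1)) - f (prefixSet σ k)) n
        _ = f (prefixSet σ n) - f (prefixSet σ 0) := Finset.sum_range_sub (fun k => f (prefixSet σ k)) n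
        _ = f Finset.univ := by
            rw [prefixSet_n]
            have : prefixSet σ 0 = ∅ := by simp [prefixSet]
            rw [this, h0, sub_zero]
    set P : Finset (Fin n) := Finset.univ.filter (fun i => 0 ≤ g (σ i)) with hP
    have hPsum : (∑ i ∈ P, g (σ i)) ≤ M := by
      have h1 : (∑ i ∈ P, g (σ i))
          = ∑ i ∈ P, (f (prefixSet σ ((i : ℕ) + 1)) - f (prefixSet σ (i : ℕ))) :=
        Finset.sum_congr rfl (fun i _ => hg i)
      rw [h1]
      calc _ ≤ f (P.image σ) - f ∅ := key_sum f hsub σ P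
        _ = f (P.image σ) := by rw [h0, sub_zero]
        _ ≤ M := le_trans (le_abs_self _) (hM _)
    have hsplit : (∑ i, |g (σ i)|) = 2 * (∑ i ∈ P, g (σ i)) - (∑ i, g (σ i)) := by
      rw [← Finset.sum_filter_add_sum_filter_not Finset.univ (fun i => 0 ≤ g (σ i))
        (fun i => |g (σ i)|)]
      rw [← Finset.sum_filter_add_sum_filter_not Finset.univ (fun i => 0 ≤ g (σ i))
        (fun i => g (σ i))]
      have e1 : (∑ i ∈ Finset.univ.filter (fun i => 0 ≤ g (σ i)), |g (σ i)|)
          = ∑ i ∈ P, g (σ i) := by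
        apply Finset.sum_congr rfl
        intro i hi
        exact abs_of_nonneg (Finset.mem_filter.mp hi).2
      have e2 : (∑ i ∈ Finset.univ.filter (fun i => ¬ 0 ≤ g (σ i)), |g (σ i)|)
          = -∑ i ∈ Finset.univ.filter (fun i => ¬ 0 ≤ g (σ i)), g (σ i) := by
        rw [← Finset.sum_neg_distrib]
        apply Finset.sum_congr rfl
        intro i hi
        exact abs_of_neg (lt_of_not_ge (Finset.mem_filter.mp hi).2)
      rw [e1, e2]
      ring
    have hfuniv : -M ≤ f Finset.univ := neg_le_of_abs_le (hM _)
    calc ‖g‖ ≤ ∑ i, |g i| := hl1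
      _ = ∑ i, |g (σ i)| := hreindex
      _ = 2 * (∑ i ∈ P, g (σ i)) - (∑ i, g (σ i)) := hsplit
      _ = 2 * (∑ i ∈ P, g (σ i)) - f Finset.univ := by rw [htotal]
      _ ≤ 2 * M + M := by linarith
      _ ≤ 4 * M := by linarith
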